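/- arXiv:2605.19853 — 5 statements merged into one kernel-verified Lean document; each statement's English description precedes it below -/
import Mathlib

section
/- If (I, J, R) is an ECOC crown decomposition of a graph G, then there exists an optimal l-ECOC solution S' (a minimum-size vertex set whose deletion leaves all components of size exactly l) such that J ⊆ S' and I ∩ S' = ∅. -/
/-! Take an optimal solution `S` and let `R₀` be the union of the components of `G - S` that lie
inside `R`. As `I` has no edges to `R`, the components of `G - (I ∪ R₀)ᶜ` are those of `G[I]` and
those of `G - S` inside `R₀`, all of size `l`. Every other component of `G - S` meets `I ∪ J`; it
either contains some `j ∈ J` and is sent to `M j`, or misses `J` and is then itself a component of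
`G[I]`. This assignment is injective, so those components cover at most `|I|` vertices, and
hence `|(I ∪ R₀)ᶜ| ≤ |S|`. -/

open SimpleGraph

variable {V : Type*}

/-- Every connected component of `G.induce X` has exactly `l` vertices. -/
def AllCompsSize (G : SimpleGraph V) (X : Set V) (l : ℕ) : Prop :=
  ∀ c : (G.induce X).ConnectedComponent, Nat.card c.supp = l

/-- `S` is an `l`-ECOC solution: every component of `G - S` has exactly `l` vertices. -/
def IsECOCSol (G : SimpleGraph V) (l : ℕ) (S : Set V) : Prop :=
  AllCompsSize G Sᶜ l

/-- The (open) neighborhood of a set `X`. -/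
def nbhd (G : SimpleGraph V) (X : Set V) : Set V :=
  {v | v ∉ X ∧ ∃ u ∈ X, G.Adj u v}

/-- ECOC crown decomposition. -/
def IsECOCCrown (G : SimpleGraph V) (l : ℕ) (I J R : Set V) : Prop :=
  (I ∪ J ∪ R = Set.univ) ∧ Disjoint I J ∧ Disjoint I R ∧ Disjoint J R ∧
  AllCompsSize G I l ∧
  (∀ u ∈ I, ∀ v ∈ R, ¬ G.Adj u v) ∧
  ∃ M : J → (G.induce I).ConnectedComponent, Function.Injective M ∧
    ∀ x : J, ∃ u ∈ (M x).supp, G.Adj (u : V) (x : V)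

/-- Strict ECOC crown decomposition. -/
def IsStrictECOCCrown (G : SimpleGraph V) (l : ℕ) (I J R : Set V) : Prop :=
  IsECOCCrown G l I J R ∧ I.Nonempty ∧
  Nat.card J + 1 ≤ Nat.card ((G.induce I).ConnectedComponent)

/-- `u` and `v` lie in `X` and in the same connected component of `G.induce X`. -/
def ReachIn (G : SimpleGraph V) (X : Set V) (u v : V) : Prop :=
  ∃ (hu : u ∈ X) (hv : v ∈ X), (G.induce X).Reachable ⟨u, hu⟩ ⟨v, hv⟩

/-- Feasibility for the LP relaxation WECOC-LP. -/
def LPFeasible (G : SimpleGraph V) (l : ℕ) (x : V → ℝ) : Prop :=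
  (∀ v, 0 ≤ x v ∧ x v ≤ 1) ∧
  ∀ C : Finset V, (G.induce (C : Set V)).Connected → C.card = l + 1 →
    1 ≤ ∑ v ∈ C, x v

/-- Alternating path w.r.t. a subgraph `M`: a path whose edges at even positions
are outside `M` and at odd positions are inside `M`. -/
def AltPath (G : SimpleGraph V) (M : G.Subgraph) {u v : V} (p : G.Walk u v) : Prop :=
  p.IsPath ∧ ∀ i : Fin p.edges.length, (p.edges.get i ∈ M.edgeSet ↔ Odd i.val)

/-- The vertex set of the component of `v` in `G[X]`; empty when `v ∉ X`. -/
def compSet (G : SimpleGraph V) (X : Set V) (v : V) : Set V := {u | ReachIn G X v u}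

def compSets (G : SimpleGraph V) (X : Set V) : Set (Set V) := compSet G X '' X

def AdjClosedIn (G : SimpleGraph V) (X A : Set V) : Prop :=
  ∀ a ∈ A, ∀ b ∈ X, G.Adj a b → b ∈ A

variable {G : SimpleGraph V} {X A B I J R S : Set V} {l : ℕ} {u v w : V}

namespace ReachIn

lemma refl (hv : v ∈ X) : ReachIn G X v v := ⟨hv, hv, .rfl⟩

lemma symm (h : ReachIn G X u v) : ReachIn G X v u :=
  let ⟨hu, hv, h⟩ := h; ⟨hv, hu, h.symm⟩

lemma trans (h : ReachIn G X u v) (h' : ReachIn G X v w) : ReachIn G X u w :=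
  let ⟨hu, _, h⟩ := h; let ⟨_, hw, h'⟩ := h'; ⟨hu, hw, h.trans h'⟩

lemma of_adj (hu : u ∈ X) (hv : v ∈ X) (h : G.Adj u v) : ReachIn G X u v :=
  ⟨hu, hv, Adj.reachable (by simpa using h)⟩

lemma mono (hAX : A ⊆ X) (h : ReachIn G A u v) : ReachIn G X u v :=
  let ⟨hu, hv, h⟩ := h; ⟨hAX hu, hAX hv, h.map (G.induceHomOfLE hAX).toHom⟩

lemma of_adjClosedIn (hA : AdjClosedIn G X A) (h : ReachIn G X u v) (hu : u ∈ A) :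
    ReachIn G A u v := by
  obtain ⟨hu', hv', ⟨p⟩⟩ := h
  suffices ∀ (x y : X), (G.induce X).Walk x y → (x : V) ∈ A → ReachIn G A x y from
    this ⟨u, hu'⟩ ⟨v, hv'⟩ p hu
  intro x y p
  induction p with
  | nil => exact refl
  | cons hab _ ih =>
    intro ha
    have hab := by simpa using hab
    have hb := hA _ ha _ (Subtype.prop _) hab
    exact (of_adj ha hb hab).trans (ih hb)

end ReachIn

lemma mem_compSet_self (hv : v ∈ X) : v ∈ compSet G X v := ReachIn.refl hv

lemma compSet_subset : compSet G X v ⊆ X := fun _ h => h.2.1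

lemma compSet_eq_of_mem (h : u ∈ compSet G X v) : compSet G X u = compSet G X v :=
  Set.ext fun _ => ⟨h.trans, h.symm.trans⟩

lemma eq_compSet_of_mem_compSets {C : Set V} (hC : C ∈ compSets G X) (hv : v ∈ C) :
    C = compSet G X v := by
  obtain ⟨w, -, rfl⟩ := hC
  exact (compSet_eq_of_mem hv).symm

lemma adjClosedIn_compSet : AdjClosedIn G X (compSet G X v) :=
  fun _ ha _ hb hab => ha.trans (.of_adj ha.2.1 hb hab)

lemma subset_of_mem_compSets {C : Set V} (hC : C ∈ compSets G X) : C ⊆ X := by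
  obtain ⟨w, -, rfl⟩ := hC
  exact compSet_subset

lemma adjClosedIn_sep (P : Set V → Prop) : AdjClosedIn G X {v ∈ X | P (compSet G X v)} := by
  rintro a ⟨haX, ha⟩ b hb hab
  have hba : b ∈ compSet G X a := adjClosedIn_compSet a (mem_compSet_self haX) b hb hab
  exact ⟨hb, compSet_eq_of_mem hba ▸ ha⟩

lemma compSet_mono (hAX : A ⊆ X) : compSet G A v ⊆ compSet G X v :=
  fun _ h => h.mono hAX

lemma compSet_eq_of_adjClosedIn (hAX : A ⊆ X) (hA : AdjClosedIn G X A) (hv : v ∈ A) :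
    compSet G X v = compSet G A v :=
  (compSet_mono hAX).antisymm' fun _ h => h.of_adjClosedIn hA hv

lemma image_supp_connectedComponentMk (hv : v ∈ X) :
    Subtype.val '' ((G.induce X).connectedComponentMk ⟨v, hv⟩).supp = compSet G X v := by
  ext u
  simp only [Set.mem_image, ConnectedComponent.mem_supp_iff, ConnectedComponent.eq, Subtype.exists,
    exists_and_right, exists_eq_right, compSet, ReachIn, Set.mem_ofPred_eq]
  exact ⟨fun ⟨hu, h⟩ => ⟨hv, hu, h.symm⟩, fun ⟨_, hu, h⟩ => ⟨hu, h.symm⟩⟩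

lemma allCompsSize_iff : AllCompsSize G X l ↔ ∀ v ∈ X, (compSet G X v).ncard = l := by
  simp only [AllCompsSize, ConnectedComponent.forall, Subtype.forall, Nat.card_coe_set_eq]
  refine forall₂_congr fun v hv => ?_
  rw [← image_supp_connectedComponentMk hv, Set.ncard_image_of_injective _ Subtype.val_injective]

lemma AllCompsSize.of_adjClosedIn (hX : AllCompsSize G X l) (hAX : A ⊆ X)
    (hA : AdjClosedIn G X A) : AllCompsSize G A l := by
  rw [allCompsSize_iff] at hX ⊢
  intro v hv
  rw [← compSet_eq_of_adjClosedIn hAX hA hv]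
  exact hX v (hAX hv)

lemma AllCompsSize.union (hA : AllCompsSize G A l) (hB : AllCompsSize G B l)
    (hAB : ∀ a ∈ A, ∀ b ∈ B, ¬ G.Adj a b) : AllCompsSize G (A ∪ B) l := by
  rw [allCompsSize_iff] at hA hB ⊢
  rintro v (hv | hv)
  · rw [compSet_eq_of_adjClosedIn Set.subset_union_left _ hv]
    · exact hA v hv
    · rintro a ha b (hb | hb) hab
      exacts [hb, absurd hab (hAB a ha b hb)]
  · rw [compSet_eq_of_adjClosedIn Set.subset_union_right _ hv]
    · exact hB v hv
    · rintro b hb a (ha | ha) hab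
      exacts [absurd hab.symm (hAB a ha b hb), ha]

lemma AllCompsSize.ncard_sep [Finite V] (hX : AllCompsSize G X l) (P : Set V → Prop) :
    {v ∈ X | P (compSet G X v)}.ncard = l * {C ∈ compSets G X | P C}.ncard := by
  rw [allCompsSize_iff] at hX
  have hunion : {v ∈ X | P (compSet G X v)} = ⋃ C ∈ {C ∈ compSets G X | P C}, C := by
    ext v
    simp only [Set.mem_ofPred_eq, Set.mem_iUnion, exists_prop]
    constructor
    · rintro ⟨hv, hP⟩
      exact ⟨_, ⟨⟨v, hv, rfl⟩, hP⟩, mem_compSet_self hv⟩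
    · rintro ⟨C, ⟨hC, hP⟩, hv⟩
      obtain rfl := eq_compSet_of_mem_compSets hC hv
      exact ⟨compSet_subset hv, hP⟩
  have hdisj : {C ∈ compSets G X | P C}.PairwiseDisjoint id := by
    rintro C ⟨hC, -⟩ C' ⟨hC', -⟩ hne
    refine Set.disjoint_left.2 fun v hv hv' => hne ?_
    rw [eq_compSet_of_mem_compSets hC hv, eq_compSet_of_mem_compSets hC' hv']
  rw [hunion]
  refine (Set.Finite.ncard_biUnion (Set.toFinite _) (fun _ _ => Set.toFinite _) hdisj).trans ?_
  rw [← finsum_one, mul_finsum_mem]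
  refine finsum_mem_congr rfl ?_
  rintro _ ⟨⟨v, hv, rfl⟩, -⟩
  simp [hX v hv]


lemma compSet_eq_compSet_of_subset_union [Finite V] (hIR : ∀ u ∈ I, ∀ v ∈ R, ¬ G.Adj u v)
    (hX : AllCompsSize G X l) (hI : AllCompsSize G I l) (hvX : v ∈ X) (hvI : v ∈ I)
    (hsub : compSet G X v ⊆ I ∪ R) : compSet G X v = compSet G I v := by
  rw [allCompsSize_iff] at hX hI
  have hclosed : AdjClosedIn G X (compSet G X v ∩ I) := by
    rintro a ⟨ha, haI⟩ b hb hab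
    have hb' := adjClosedIn_compSet a ha b hb hab
    exact ⟨hb', (hsub hb').resolve_right fun hbR => hIR a haI b hbR hab⟩
  have hsubI : compSet G X v ⊆ compSet G I v :=
    (compSet_eq_of_adjClosedIn (Set.inter_subset_left.trans compSet_subset) hclosed
      ⟨mem_compSet_self hvX, hvI⟩).trans_subset (compSet_mono Set.inter_subset_right)
  exact Set.eq_of_subset_of_ncard_le hsubI (by rw [hX v hvX, hI v hvI]) (Set.toFinite _)

namespace IsECOCCrown

lemma exists_partner (h : IsECOCCrown G l I J R) :
    ∃ m : J → V, (∀ j, m j ∈ I ∧ G.Adj (m j) j) ∧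
      ∀ j j', ReachIn G I (m j) (m j') → j = j' := by
  obtain ⟨-, -, -, -, -, -, M, hM_inj, hM_adj⟩ := h
  choose u hu hadj using hM_adj
  refine ⟨fun j => u j, fun j => ⟨(u j).2, hadj j⟩, fun j j' ⟨_, _, hr⟩ => hM_inj ?_⟩
  rw [← (ConnectedComponent.mem_supp_iff _ _).1 (hu j), ← (ConnectedComponent.mem_supp_iff _ _).1 (hu j')]
  exact ConnectedComponent.eq.2 hr

lemma ncard_compSets_not_subset_le [Finite V] (hcrown : IsECOCCrown G l I J R)
    (hX : AllCompsSize G X l) :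
    {C ∈ compSets G X | ¬ C ⊆ R}.ncard ≤ (compSets G I).ncard := by
  classical
  obtain ⟨m, hm, hm_inj⟩ := hcrown.exists_partner
  obtain ⟨hcover, -, -, -, hI, hIR, -⟩ := hcrown
  -- the injection: a component meeting `J` goes to the component of `G[I]` matched to one of its
  -- vertices in `J`; any other one is itself a component of `G[I]`
  let f : Set V → Set V := fun C =>
    if h : ∃ j : J, (j : V) ∈ C then compSet G I (m h.choose) else C
  have hf_inj : ∀ C ∈ compSets G X, ∀ C' ∈ compSets G X, f C = f C' →
      (∃ j : J, (j : V) ∈ C) → C = C' := by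
    intro C hC C' hC' heq h
    simp only [f, dif_pos h] at heq
    by_cases h' : ∃ j : J, (j : V) ∈ C'
    · simp only [dif_pos h'] at heq
      have hmm : m h'.choose ∈ compSet G I (m h.choose) := heq ▸ mem_compSet_self (hm _).1
      have hj : h.choose = h'.choose := hm_inj _ _ hmm
      rw [eq_compSet_of_mem_compSets hC h.choose_spec,
        eq_compSet_of_mem_compSets hC' (hj ▸ h'.choose_spec)]
    · simp only [dif_neg h'] at heq
      have hmC' : m h.choose ∈ C' := heq ▸ mem_compSet_self (hm _).1
      obtain ⟨w, -, rfl⟩ := hC'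
      exact absurd ⟨h.choose, adjClosedIn_compSet _ hmC' _
        (subset_of_mem_compSets hC h.choose_spec) (hm _).2⟩ h'
  refine Set.ncard_le_ncard_of_injOn f ?_ ?_
  · rintro C ⟨hC, hCR⟩
    by_cases h : ∃ j : J, (j : V) ∈ C
    · simp only [f, dif_pos h]
      exact ⟨_, (hm _).1, rfl⟩
    · simp only [f, dif_neg h]
      have hC_IR : C ⊆ I ∪ R := fun u hu => by
        rcases Set.eq_univ_iff_forall.1 hcover u with (huI | huJ) | huR
        exacts [.inl huI, absurd ⟨⟨u, huJ⟩, hu⟩ h, .inr huR]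
      obtain ⟨v, hvC, hvR⟩ := Set.not_subset.1 hCR
      have hvI : v ∈ I := (hC_IR hvC).resolve_right hvR
      obtain rfl := eq_compSet_of_mem_compSets hC hvC
      exact ⟨v, hvI, (compSet_eq_compSet_of_subset_union hIR hX hI
        (subset_of_mem_compSets hC hvC) hvI hC_IR).symm⟩
  · rintro C ⟨hC, -⟩ C' ⟨hC', -⟩ heq
    by_cases h : ∃ j : J, (j : V) ∈ C
    · exact hf_inj C hC C' hC' heq h
    by_cases h' : ∃ j : J, (j : V) ∈ C'
    · exact (hf_inj C' hC' C hC heq.symm h').symm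
    simpa only [f, dif_neg h, dif_neg h'] using heq

lemma ncard_not_subset_le [Finite V] (hcrown : IsECOCCrown G l I J R)
    (hX : AllCompsSize G X l) : {v ∈ X | ¬ compSet G X v ⊆ R}.ncard ≤ I.ncard := by
  have hI : AllCompsSize G I l := hcrown.2.2.2.2.1
  calc {v ∈ X | ¬ compSet G X v ⊆ R}.ncard
      = l * {C ∈ compSets G X | ¬ C ⊆ R}.ncard := hX.ncard_sep fun C => ¬ C ⊆ R
    _ ≤ l * {C ∈ compSets G I | True}.ncard :=
      Nat.mul_le_mul_left l (by simpa using hcrown.ncard_compSets_not_subset_le hX)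
    _ = {v ∈ I | True}.ncard := (hI.ncard_sep _).symm
    _ = I.ncard := by simp

lemma isECOCSol_compl_union (hcrown : IsECOCCrown G l I J R) (hS : IsECOCSol G l S) :
    IsECOCSol G l (I ∪ {v ∈ Sᶜ | compSet G Sᶜ v ⊆ R})ᶜ := by
  obtain ⟨-, -, -, -, hI, hIR, -⟩ := hcrown
  rw [IsECOCSol, compl_compl]
  refine hI.union (hS.of_adjClosedIn (Set.sep_subset _ _) (adjClosedIn_sep (· ⊆ R))) ?_
  exact fun a ha b ⟨hbS, hbR⟩ => hIR a ha b (hbR (mem_compSet_self hbS))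

lemma ncard_compl_union_le [Finite V] (hcrown : IsECOCCrown G l I J R) (hS : IsECOCSol G l S) :
    (I ∪ {v ∈ Sᶜ | compSet G Sᶜ v ⊆ R})ᶜ.ncard ≤ S.ncard := by
  set R₀ := {v ∈ Sᶜ | compSet G Sᶜ v ⊆ R}
  have hR₀ : R₀ ⊆ R := fun v hv => hv.2 (mem_compSet_self hv.1)
  have hIR₀ : (I ∪ R₀).ncard = I.ncard + R₀.ncard :=
    Set.ncard_union_eq (hcrown.2.2.1.mono_right hR₀)
  have hS_split : R₀.ncard + {v ∈ Sᶜ | ¬ compSet G Sᶜ v ⊆ R}.ncard = Sᶜ.ncard :=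
    Set.ncard_inter_add_ncard_sdiff_eq_ncard Sᶜ {v | compSet G Sᶜ v ⊆ R}
  have hle := hcrown.ncard_not_subset_le hS
  have hS_compl := Set.ncard_add_ncard_compl S
  have hIR₀_compl := Set.ncard_add_ncard_compl (I ∪ R₀)
  omega

end IsECOCCrown

theorem stmt0_general [Fintype V] (G : SimpleGraph V) (l : ℕ)
    (I J R : Set V) (hcrown : IsECOCCrown G l I J R)
    (hex : ∃ S : Set V, IsECOCSol G l S) :
    ∃ S' : Set V, IsECOCSol G l S' ∧ J ⊆ S' ∧ I ∩ S' = ∅ ∧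
      ∀ S : Set V, IsECOCSol G l S → Nat.card S' ≤ Nat.card S := by
  obtain ⟨S, hS, hS_min⟩ :=
    Set.exists_min_image {S | IsECOCSol G l S} (fun S => Nat.card S) (Set.toFinite _) hex
  refine ⟨(I ∪ {v ∈ Sᶜ | compSet G Sᶜ v ⊆ R})ᶜ, hcrown.isECOCSol_compl_union hS, ?_,
    Set.disjoint_iff_inter_eq_empty.1 (disjoint_compl_right.mono_left Set.subset_union_left),
    fun S₁ hS₁ => le_trans ?_ (hS_min S₁ hS₁)⟩
  · obtain ⟨-, hIJ, -, hJR, -⟩ := hcrown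
    rintro j hj (hjI | ⟨hjS, hjR⟩)
    exacts [hIJ.notMem_of_mem_left hjI hj, hJR.notMem_of_mem_left hj (hjR (mem_compSet_self hjS))]
  · simpa only [Nat.card_coe_set_eq] using hcrown.ncard_compl_union_le hS

theorem stmt0 [Fintype V] (G : SimpleGraph V) (l : ℕ) (hl : 1 ≤ l)
    (I J R : Set V) (hcrown : IsECOCCrown G l I J R)
    (hex : ∃ S : Set V, IsECOCSol G l S) :
    ∃ S' : Set V, IsECOCSol G l S' ∧ J ⊆ S' ∧ I ∩ S' = ∅ ∧
      ∀ S : Set V, IsECOCSol G l S → Nat.card S' ≤ Nat.card S :=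
  stmt0_general G l I J R hcrown hex
end

section
/- Let G be a graph, I ⊆ V(G) nonempty with J = N(I), and let 𝒞 be the set of connected components of G[I]. If every component in 𝒞 has exactly l vertices and |𝒞| ≥ |J| + 1, then there exist nonempty I' ⊆ I and J' ⊆ J such that (I', J', V(G) \ (I' ∪ J')) is a strict ECOC crown decomposition of G, i.e., an ECOC crown decomposition in which the number of connected components of G[I'] is at least |J'| + 1. -/
open SimpleGraph

variable {V : Type*}

/-! If the components of `G[I]` can be matched injectively into `N(I)`, then `(I, N(I), rest)` is
already a strict crown. Otherwise Hall's theorem yields `s ⊆ N(I)` adjacent to fewer than `|s|`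
components; discarding those components leaves a union `I₀` of fewer components with
`N(I₀) ⊆ N(I) \ s`, so the surplus of components over neighbours does not decrease, and we recurse
on `I₀`. -/

section ClosedSubset

variable {G : SimpleGraph V} {X Y : Set V}

theorem exists_reachable_induce_of_closed
    (hY : ∀ ⦃u v : V⦄, u ∈ Y → v ∈ X → G.Adj u v → v ∈ Y)
    {u v : X} (w : (G.induce X).Walk u v) (hu : (u : V) ∈ Y) :
    ∃ hv : (v : V) ∈ Y, (G.induce Y).Reachable ⟨u, hu⟩ ⟨v, hv⟩ := by
  induction w with
  | nil => exact ⟨hu, .rfl⟩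
  | @cons a b c hab _ ih =>
    have hb : (b : V) ∈ Y := hY hu b.2 hab
    obtain ⟨hc, hbc⟩ := ih hb
    exact ⟨hc, (Adj.reachable (show (G.induce Y).Adj ⟨a, hu⟩ ⟨b, hb⟩ from hab)).trans hbc⟩

variable (G) in
abbrev inclusionComponentMap (hYX : Y ⊆ X) :
    (G.induce Y).ConnectedComponent → (G.induce X).ConnectedComponent :=
  ConnectedComponent.map (G.induceHomOfLE hYX).toHom

theorem inclusionComponentMap_mk (hYX : Y ⊆ X) (v : Y) :
    inclusionComponentMap G hYX ((G.induce Y).connectedComponentMk v) =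
      (G.induce X).connectedComponentMk (Set.inclusion hYX v) := rfl

theorem inclusionComponentMap_injective (hYX : Y ⊆ X)
    (hY : ∀ ⦃u v : V⦄, u ∈ Y → v ∈ X → G.Adj u v → v ∈ Y) :
    Function.Injective (inclusionComponentMap G hYX) := by
  refine ConnectedComponent.ind₂ fun u v huv => ?_
  obtain ⟨w⟩ := ConnectedComponent.exact huv
  obtain ⟨_, hr⟩ := exists_reachable_induce_of_closed hY w u.2
  exact ConnectedComponent.sound hr

theorem image_val_supp_inclusionComponentMap (hYX : Y ⊆ X)
    (hY : ∀ ⦃u v : V⦄, u ∈ Y → v ∈ X → G.Adj u v → v ∈ Y)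
    (c : (G.induce Y).ConnectedComponent) :
    Subtype.val '' (inclusionComponentMap G hYX c).supp = Subtype.val '' c.supp := by
  induction c using ConnectedComponent.ind with | h u => ?_
  ext x
  constructor
  · rintro ⟨w, hw, rfl⟩
    rw [ConnectedComponent.mem_supp_iff, inclusionComponentMap_mk] at hw
    obtain ⟨p⟩ := (ConnectedComponent.exact hw).symm
    obtain ⟨hwY, hr⟩ := exists_reachable_induce_of_closed hY p u.2
    exact ⟨⟨w, hwY⟩, (ConnectedComponent.sound hr).symm, rfl⟩
  · rintro ⟨w, hw, rfl⟩
    refine ⟨Set.inclusion hYX w, ?_, rfl⟩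
    rw [ConnectedComponent.mem_supp_iff, ← inclusionComponentMap_mk, ← hw]

theorem card_supp_inclusionComponentMap (hYX : Y ⊆ X)
    (hY : ∀ ⦃u v : V⦄, u ∈ Y → v ∈ X → G.Adj u v → v ∈ Y)
    (c : (G.induce Y).ConnectedComponent) :
    Nat.card (inclusionComponentMap G hYX c).supp = Nat.card c.supp := by
  rw [Nat.card_coe_set_eq, Nat.card_coe_set_eq,
    ← Set.ncard_image_of_injective _ Subtype.val_injective,
    ← Set.ncard_image_of_injective c.supp Subtype.val_injective,
    image_val_supp_inclusionComponentMap hYX hY]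

end ClosedSubset

section ComponentUnion

variable {G : SimpleGraph V} {X : Set V} {S : Set (G.induce X).ConnectedComponent}

variable (G) in
def componentUnion (X : Set V) (S : Set (G.induce X).ConnectedComponent) : Set V :=
  {v | ∃ h : v ∈ X, (G.induce X).connectedComponentMk ⟨v, h⟩ ∈ S}

theorem componentUnion_subset : componentUnion G X S ⊆ X := fun _ h => h.1

theorem componentUnion_closed ⦃u v : V⦄ (hu : u ∈ componentUnion G X S) (hv : v ∈ X)
    (huv : G.Adj u v) : v ∈ componentUnion G X S := by
  obtain ⟨huX, huS⟩ := hu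
  refine ⟨hv, ?_⟩
  rwa [← ConnectedComponent.connectedComponentMk_eq_of_adj
    (show (G.induce X).Adj ⟨u, huX⟩ ⟨v, hv⟩ from huv)]

theorem range_inclusionComponentMap_componentUnion :
    Set.range (inclusionComponentMap G (componentUnion_subset (S := S))) = S := by
  ext c
  constructor
  · rintro ⟨d, rfl⟩
    induction d using ConnectedComponent.ind with | h u => exact u.2.2
  · intro hc
    induction c using ConnectedComponent.ind with | h u => ?_
    exact ⟨(G.induce _).connectedComponentMk ⟨u, u.2, hc⟩, rfl⟩

theorem card_connectedComponent_componentUnion :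
    Nat.card (G.induce (componentUnion G X S)).ConnectedComponent = Nat.card S := by
  rw [← Nat.card_range_of_injective
      (inclusionComponentMap_injective componentUnion_subset componentUnion_closed),
    range_inclusionComponentMap_componentUnion]

theorem AllCompsSize.componentUnion {l : ℕ} (hsz : AllCompsSize G X l) :
    AllCompsSize G (componentUnion G X S) l := fun c => by
  rw [← card_supp_inclusionComponentMap componentUnion_subset componentUnion_closed c]
  exact hsz _

theorem nbhd_componentUnion_subset : nbhd G (componentUnion G X S) ⊆ nbhd G X := by
  rintro v ⟨hv, u, hu, huv⟩
  exact ⟨fun hvX => hv (componentUnion_closed hu hvX huv), u, componentUnion_subset hu, huv⟩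

end ComponentUnion

section Crown

variable {G : SimpleGraph V} {l : ℕ} {I : Set V}

theorem isECOCCrown_nbhd (hsz : AllCompsSize G I l)
    (M : nbhd G I → (G.induce I).ConnectedComponent) (hM : Function.Injective M)
    (hMadj : ∀ x, ∃ u ∈ (M x).supp, G.Adj (u : V) x) :
    IsECOCCrown G l I (nbhd G I) (I ∪ nbhd G I)ᶜ := by
  refine ⟨Set.union_compl_self _, Set.disjoint_left.mpr fun _ hv hvJ => hvJ.1 hv,
    Set.disjoint_left.mpr fun _ hv hvR => hvR (.inl hv),
    Set.disjoint_left.mpr fun _ hv hvR => hvR (.inr hv), hsz, ?_, M, hM, hMadj⟩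
  intro u hu v hv huv
  exact hv (.inr ⟨fun hvI => hv (.inl hvI), u, hu, huv⟩)

theorem exists_fewer_components_of_not_matching [Finite V]
    (hcount : Nat.card (nbhd G I) + 1 ≤ Nat.card (G.induce I).ConnectedComponent)
    (hM : ¬ ∃ M : nbhd G I → (G.induce I).ConnectedComponent, Function.Injective M ∧
      ∀ x, ∃ u ∈ (M x).supp, G.Adj (u : V) x) :
    ∃ S : Set (G.induce I).ConnectedComponent,
      Nat.card S < Nat.card (G.induce I).ConnectedComponent ∧
      Nat.card (nbhd G (componentUnion G I S)) + 1 ≤ Nat.card S := by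
  classical
  have := Fintype.ofFinite (G.induce I).ConnectedComponent
  have := Fintype.ofFinite (nbhd G I)
  let t (x : nbhd G I) : Finset (G.induce I).ConnectedComponent :=
    {c | ∃ u ∈ c.supp, G.Adj (u : V) x}
  obtain ⟨s, hs⟩ : ∃ s : Finset (nbhd G I), (s.biUnion t).card < s.card := by
    by_contra! hHall
    obtain ⟨M, hMinj, hMt⟩ := (Finset.all_card_le_biUnion_card_iff_exists_injective t).mp hHall
    exact hM ⟨M, hMinj, fun x => by simpa [t] using hMt x⟩
  have hmem_t (x : nbhd G I) (u : V) (hu : u ∈ I) (hux : G.Adj u x) :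
      (G.induce I).connectedComponentMk ⟨u, hu⟩ ∈ t x := by
    simp only [t, Finset.mem_filter]
    exact ⟨Finset.mem_univ _, ⟨u, hu⟩, rfl, hux⟩
  set B := s.biUnion t
  have hB : B.Nonempty := by
    obtain ⟨x, hx⟩ := Finset.card_pos.mp (Nat.zero_lt_of_lt hs)
    obtain ⟨-, u, hu, hux⟩ := x.2
    exact ⟨_, Finset.mem_biUnion.mpr ⟨x, hx, hmem_t x u hu hux⟩⟩
  have hnbhd :
      Nat.card (nbhd G (componentUnion G I ↑Bᶜ)) ≤ Nat.card (sᶜ : Finset (nbhd G I)) := by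
    -- a neighbour of a kept component cannot lie in `s`, whose neighbours all lie in `B`
    refine Nat.card_le_card_of_injective
      (fun v => (⟨⟨v, nbhd_componentUnion_subset v.2⟩, ?_⟩ : (sᶜ : Finset (nbhd G I))))
      fun v w h => Subtype.ext (by simpa using h)
    obtain ⟨-, u, ⟨hu, huB⟩, huv⟩ := v.2
    exact Finset.mem_compl.mpr fun hvs =>
      Finset.mem_compl.mp huB (Finset.mem_biUnion.mpr ⟨_, hvs, hmem_t _ u hu huv⟩)
  refine ⟨↑Bᶜ, ?_, ?_⟩ <;>
    simp only [Finset.coe_sort_coe, Nat.card_eq_fintype_card, Fintype.card_coe,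
      Finset.card_compl] at hcount hnbhd ⊢
  · exact Nat.sub_lt (Fintype.card_pos_iff.mpr ⟨hB.choose⟩) hB.card_pos
  · have := B.card_le_univ
    have := s.card_le_univ
    omega

end Crown

theorem stmt2_general [Fintype V] (G : SimpleGraph V) (l : ℕ)
    (I : Set V)
    (hsz : AllCompsSize G I l)
    (hcount : Nat.card (nbhd G I) + 1 ≤ Nat.card ((G.induce I).ConnectedComponent)) :
    ∃ I' J' : Set V, I'.Nonempty ∧ I' ⊆ I ∧ J' ⊆ nbhd G I ∧
      IsStrictECOCCrown G l I' J' (I' ∪ J')ᶜ := by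
  induction hn : Nat.card (G.induce I).ConnectedComponent using Nat.strong_induction_on
    generalizing I with
  | _ n ih =>
  by_cases hM : ∃ M : nbhd G I → (G.induce I).ConnectedComponent, Function.Injective M ∧
      ∀ x, ∃ u ∈ (M x).supp, G.Adj (u : V) x
  · obtain ⟨M, hMinj, hMadj⟩ := hM
    obtain ⟨c⟩ := (Nat.card_pos_iff.mp (Nat.zero_lt_of_lt hcount)).1
    have hI : I.Nonempty := ⟨_, c.out.2⟩
    exact ⟨I, nbhd G I, hI, subset_rfl, subset_rfl,
      ⟨isECOCCrown_nbhd hsz M hMinj hMadj, hI, hcount⟩⟩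
  · obtain ⟨S, hSlt, hScount⟩ := exists_fewer_components_of_not_matching hcount hM
    obtain ⟨I', J', hI'ne, hI'sub, hJ'sub, hcrown⟩ :=
      ih _ (hn ▸ hSlt) (componentUnion G I S) hsz.componentUnion
        (by rwa [card_connectedComponent_componentUnion]) card_connectedComponent_componentUnion
    exact ⟨I', J', hI'ne, hI'sub.trans componentUnion_subset,
      hJ'sub.trans nbhd_componentUnion_subset, hcrown⟩

theorem stmt2 [Fintype V] (G : SimpleGraph V) (l : ℕ) (hl : 1 ≤ l)
    (I : Set V) (hI : I.Nonempty)
    (hsz : AllCompsSize G I l)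
    (hcount : Nat.card (nbhd G I) + 1 ≤ Nat.card ((G.induce I).ConnectedComponent)) :
    ∃ I' J' : Set V, I'.Nonempty ∧ I' ⊆ I ∧ J' ⊆ nbhd G I ∧
      IsStrictECOCCrown G l I' J' (I' ∪ J')ᶜ :=
  stmt2_general G l I hsz hcount
end

section
/- Let (I, J, R) be an ECOC crown decomposition of G, and let x: V → [0,1] be any assignment that (a) equals 1 on every vertex of J and (b) is arbitrary on I and satisfies the LP constraints on V \ I (i.e., Σ_{v∈C} x_v ≥ 1 for every connected set C of size l+1 with C ∩ I = ∅). Then x satisfies Σ_{v∈C} x_v ≥ 1 for every connected set C of size l+1 in G. -/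
open SimpleGraph

variable {V : Type*}

/-! A connected `(l+1)`-set meeting `I` cannot lie inside `I`, whose components have only `l`
vertices, so it leaves `I` along an edge and hence contains a vertex of `N(I) ⊆ J`, where `x` is
already `1`. Connected sets avoiding `I` are covered by hypothesis. -/

namespace SimpleGraph

variable {G : SimpleGraph V}

theorem Walk.exists_mem_nbhd {u v : V} (p : G.Walk u v) {X : Set V} (hu : u ∈ X) (hv : v ∉ X) :
    ∃ w ∈ p.support, w ∈ nbhd G X := by
  obtain ⟨d, hd, hfst, hsnd⟩ := p.exists_boundary_dart X hu hv
  exact ⟨d.snd, p.dart_snd_mem_support_of_mem_darts hd, hsnd, d.fst, hfst, d.adj⟩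

theorem exists_mem_nbhd_of_induce_connected {C X : Set V} (hC : (G.induce C).Connected)
    {a b : V} (haC : a ∈ C) (haX : a ∈ X) (hbC : b ∈ C) (hbX : b ∉ X) :
    ∃ w ∈ C, w ∈ nbhd G X := by
  obtain ⟨p⟩ := hC.preconnected ⟨a, haC⟩ ⟨b, hbC⟩
  obtain ⟨w, hw, hwX⟩ := (p.map (Embedding.induce C).toHom).exists_mem_nbhd haX hbX
  obtain ⟨w', -, rfl⟩ := List.mem_map.mp ((p.support_map _).symm ▸ hw)
  exact ⟨w', w'.2, hwX⟩

theorem AllCompsSize.card_le_of_induce_connected [Finite V] {X : Set V} {l : ℕ}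
    (hX : AllCompsSize G X l) {C : Finset V} (hC : (G.induce (C : Set V)).Connected)
    (hCX : (C : Set V) ⊆ X) : C.card ≤ l := by
  obtain ⟨a⟩ := hC.nonempty
  let ι := induceHomOfLE G hCX
  let c := (G.induce X).connectedComponentMk (ι a)
  have hmem (w : (C : Set V)) : ι w ∈ c.supp :=
    ConnectedComponent.sound ((hC.preconnected a w).map ι.toHom).symm
  have hinj : Function.Injective (fun w : (C : Set V) => (⟨ι w, hmem w⟩ : c.supp)) :=
    fun u v huv => ι.injective (congrArg Subtype.val huv)
  calc C.card = Nat.card (C : Set V) := (Nat.card_eq_finsetCard C).symm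
    _ ≤ Nat.card c.supp := Nat.card_le_card_of_injective _ hinj
    _ = l := hX c

end SimpleGraph

theorem IsECOCCrown.nbhd_subset {G : SimpleGraph V} {l : ℕ} {I J R : Set V}
    (h : IsECOCCrown G l I J R) : nbhd G I ⊆ J := by
  obtain ⟨hcover, -, -, -, -, hIR, -⟩ := h
  rintro v ⟨hvI, u, huI, huv⟩
  have hv : v ∈ I ∪ J ∪ R := hcover ▸ Set.mem_univ v
  rcases hv with (hI | hJ) | hR
  exacts [absurd hI hvI, hJ, absurd huv (hIR u huI v hR)]

theorem stmt12_general [Fintype V] (G : SimpleGraph V) (l : ℕ)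
    (I J R : Set V) (hcrown : IsECOCCrown G l I J R)
    (x : V → ℝ) (hb : ∀ v, 0 ≤ x v ∧ x v ≤ 1) (hJ : ∀ v ∈ J, x v = 1)
    (hcon : ∀ C : Finset V, (G.induce (C : Set V)).Connected → C.card = l + 1 →
      (C : Set V) ∩ I = ∅ → 1 ≤ ∑ v ∈ C, x v) :
    ∀ C : Finset V, (G.induce (C : Set V)).Connected → C.card = l + 1 →
      1 ≤ ∑ v ∈ C, x v := by
  intro C hC hcard
  rcases Set.eq_empty_or_nonempty ((C : Set V) ∩ I) with hCI | ⟨a, haC, haI⟩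
  · exact hcon C hC hcard hCI
  have hcomps : AllCompsSize G I l := hcrown.2.2.2.2.1
  have hCnotI : ¬ (C : Set V) ⊆ I := fun hCI =>
    absurd (hcomps.card_le_of_induce_connected hC hCI) (by omega)
  obtain ⟨b, hbC, hbI⟩ := Set.not_subset.mp hCnotI
  obtain ⟨v, hvC, hvN⟩ := G.exists_mem_nbhd_of_induce_connected hC haC haI hbC hbI
  calc (1 : ℝ) = x v := (hJ v (hcrown.nbhd_subset hvN)).symm
    _ ≤ ∑ w ∈ C, x w := Finset.single_le_sum (fun w _ => (hb w).1) hvC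

theorem stmt12 [Fintype V] (G : SimpleGraph V) (l : ℕ) (hl : 1 ≤ l)
    (I J R : Set V) (hcrown : IsECOCCrown G l I J R)
    (x : V → ℝ) (hb : ∀ v, 0 ≤ x v ∧ x v ≤ 1) (hJ : ∀ v ∈ J, x v = 1)
    (hcon : ∀ C : Finset V, (G.induce (C : Set V)).Connected → C.card = l + 1 →
      (C : Set V) ∩ I = ∅ → 1 ≤ ∑ v ∈ C, x v) :
    ∀ C : Finset V, (G.induce (C : Set V)).Connected → C.card = l + 1 →
      1 ≤ ∑ v ∈ C, x v :=
  stmt12_general G l I J R hcrown x hb hJ hcon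
end

section
/- Let G' be a bipartite graph with parts A' and B' where |A'| ≥ |B'| + 1. Then G' admits a VC crown decomposition: a partition (I, J, R) of V(G') with I ⊆ A' nonempty and independent, no edges between I and R, and a matching saturating J with all matched partners in I. -/
open SimpleGraph

variable {V : Type*}

/-! A subset `S ⊆ A` with `|N(S)| < |S|` exists because `|A| > |B|`; take one that is minimal
under inclusion. Hall's condition for matching `N(S)` into `S` then holds: a violator `T ⊆ N(S)`
with `|S ∩ N(T)| < |T|` would make `S \ N(T)` a smaller such set. Since `S ⊆ A` is independent,
`(S, N(S), rest)` is the crown. -/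

namespace SimpleGraph

section Deficiency

variable [Fintype V] (G : SimpleGraph V) [DecidableRel G.Adj]

open Finset

/-- Unlike `nbhd`, this neighbourhood may meet `S`, so that
`finsetNbhd_sdiff_finsetNbhd_subset` needs no independence. -/
def finsetNbhd (S : Finset V) : Finset V := {v | ∃ u ∈ S, G.Adj u v}

def IsDeficient (S : Finset V) : Prop := #(G.finsetNbhd S) < #S

variable {G}

@[simp]
lemma mem_finsetNbhd {S : Finset V} {v : V} : v ∈ G.finsetNbhd S ↔ ∃ u ∈ S, G.Adj u v := by
  simp [finsetNbhd]

lemma finsetNbhd_sdiff_finsetNbhd_subset [DecidableEq V] (S T : Finset V) :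
    G.finsetNbhd (S \ G.finsetNbhd T) ⊆ G.finsetNbhd S \ T := by
  intro v hv
  obtain ⟨u, hu, huv⟩ := mem_finsetNbhd.mp hv
  obtain ⟨huS, huT⟩ := mem_sdiff.mp hu
  exact mem_sdiff.mpr ⟨mem_finsetNbhd.mpr ⟨u, huS, huv⟩,
    fun hvT => huT (mem_finsetNbhd.mpr ⟨v, hvT, huv.symm⟩)⟩

lemma card_le_card_inter_finsetNbhd_of_minimal [DecidableEq V] {S T : Finset V}
    (hS : Minimal G.IsDeficient S) (hT : T ⊆ G.finsetNbhd S) :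
    #T ≤ #(S ∩ G.finsetNbhd T) := by
  by_contra! hlt
  have hTS : #T ≤ #(G.finsetNbhd S) := card_le_card hT
  have hnbhd : #(G.finsetNbhd (S \ G.finsetNbhd T)) ≤ #(G.finsetNbhd S) - #T := by
    rw [← card_sdiff_of_subset hT]
    exact card_le_card (finsetNbhd_sdiff_finsetNbhd_subset S T)
  have hdef : G.IsDeficient (S \ G.finsetNbhd T) := by
    have hSdef : #(G.finsetNbhd S) < #S := hS.1
    rw [IsDeficient, card_sdiff, inter_comm]
    omega
  have hS' : S \ G.finsetNbhd T = S := sdiff_subset.antisymm (hS.2 hdef sdiff_subset)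
  rw [hS'] at hnbhd
  omega

lemma exists_injective_adj_of_minimal [DecidableEq V] {S : Finset V}
    (hS : Minimal G.IsDeficient S) :
    ∃ f : G.finsetNbhd S → S, Function.Injective f ∧
      ∀ v : G.finsetNbhd S, G.Adj v (f v) := by
  have hall : ∀ s : Finset (G.finsetNbhd S),
      #s ≤ #(s.biUnion fun v => S ∩ G.neighborFinset v) := by
    intro s
    have hunion : s.biUnion (fun v => S ∩ G.neighborFinset v)
        = S ∩ G.finsetNbhd (s.map (Function.Embedding.subtype _)) := by
      ext u
      simp only [mem_biUnion, mem_inter, mem_neighborFinset, mem_finsetNbhd, mem_map,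
        Function.Embedding.coe_subtype]
      aesop
    rw [hunion, ← card_map (Function.Embedding.subtype _)]
    refine card_le_card_inter_finsetNbhd_of_minimal hS fun v hv => ?_
    obtain ⟨w, -, rfl⟩ := mem_map.mp hv
    exact w.2
  obtain ⟨f, hf_inj, hf⟩ := (all_card_le_biUnion_card_iff_exists_injective _).mp hall
  refine ⟨fun v => ⟨f v, (mem_inter.mp (hf v)).1⟩,
    fun v w h => hf_inj (congrArg Subtype.val h), fun v => ?_⟩
  exact (G.mem_neighborFinset _ _).mp (mem_inter.mp (hf v)).2

end Deficiency

lemma mem_right_of_adj_of_mem_left (G : SimpleGraph V) {A B : Set V} (hdisj : Disjoint A B)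
    (hbip : ∀ u v, G.Adj u v → (u ∈ A ∧ v ∈ B) ∨ (u ∈ B ∧ v ∈ A)) {u v : V}
    (hu : u ∈ A) (huv : G.Adj u v) : v ∈ B := by
  rcases hbip u v huv with ⟨-, hv⟩ | ⟨hu', -⟩
  · exact hv
  · exact absurd hu' (Set.disjoint_left.mp hdisj hu)

end SimpleGraph

theorem stmt16_general [Fintype V] (G : SimpleGraph V) (A B : Set V)
    (hdisj : Disjoint A B)
    (hbip : ∀ u v, G.Adj u v → (u ∈ A ∧ v ∈ B) ∨ (u ∈ B ∧ v ∈ A))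
    (hcard : Nat.card B + 1 ≤ Nat.card A) :
    ∃ I J R : Set V,
      (I ∪ J ∪ R = Set.univ) ∧ Disjoint I J ∧ Disjoint I R ∧ Disjoint J R ∧
      I ⊆ A ∧ I.Nonempty ∧
      (∀ u ∈ I, ∀ v ∈ I, ¬ G.Adj u v) ∧
      (∀ u ∈ I, ∀ v ∈ R, ¬ G.Adj u v) ∧
      ∃ M : J → I, Function.Injective M ∧ ∀ x : J, G.Adj (x : V) (M x : V) := by
  classical
  have hAB {u v : V} : u ∈ A → G.Adj u v → v ∈ B :=
    G.mem_right_of_adj_of_mem_left hdisj hbip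
  have hA : G.IsDeficient A.toFinset := calc
    (G.finsetNbhd A.toFinset).card ≤ B.toFinset.card := Finset.card_le_card fun v hv => by
      obtain ⟨u, hu, huv⟩ := G.mem_finsetNbhd.mp hv
      exact Set.mem_toFinset.mpr (hAB (Set.mem_toFinset.mp hu) huv)
    _ < A.toFinset.card := by simp only [← Nat.card_eq_card_toFinset]; omega
  obtain ⟨S, hS_le, hS⟩ := exists_minimal_le_of_wellFoundedLT G.IsDeficient _ hA
  have hSA : ∀ u ∈ S, u ∈ A := fun u hu => Set.mem_toFinset.mp (hS_le hu)
  have hNB : ∀ v ∈ G.finsetNbhd S, v ∈ B := fun v hv => by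
    obtain ⟨u, hu, huv⟩ := G.mem_finsetNbhd.mp hv
    exact hAB (hSA u hu) huv
  obtain ⟨M, hM_inj, hM_adj⟩ := G.exists_injective_adj_of_minimal hS
  refine ⟨S, G.finsetNbhd S, (S ∪ G.finsetNbhd S : Set V)ᶜ, Set.union_compl_self _, ?_,
    disjoint_compl_right.mono_left Set.subset_union_left,
    disjoint_compl_right.mono_left Set.subset_union_right, hSA, ?_, ?_, ?_, M, hM_inj, hM_adj⟩
  · exact Set.disjoint_left.mpr fun v hvS hvN =>
      Set.disjoint_left.mp hdisj (hSA v hvS) (hNB v hvN)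
  · exact Finset.coe_nonempty.mpr (Finset.card_pos.mp ((Nat.zero_le _).trans_lt hS.1))
  · exact fun u hu v hv huv => Set.disjoint_left.mp hdisj (hSA v hv) (hAB (hSA u hu) huv)
  · exact fun u hu v hv huv => hv (Or.inr (G.mem_finsetNbhd.mpr ⟨u, hu, huv⟩))

theorem stmt16 [Fintype V] (G : SimpleGraph V) (A B : Set V)
    (hpart : A ∪ B = Set.univ) (hdisj : Disjoint A B)
    (hbip : ∀ u v, G.Adj u v → (u ∈ A ∧ v ∈ B) ∨ (u ∈ B ∧ v ∈ A))
    (hcard : Nat.card B + 1 ≤ Nat.card A) :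
    ∃ I J R : Set V,
      (I ∪ J ∪ R = Set.univ) ∧ Disjoint I J ∧ Disjoint I R ∧ Disjoint J R ∧
      I ⊆ A ∧ I.Nonempty ∧
      (∀ u ∈ I, ∀ v ∈ I, ¬ G.Adj u v) ∧
      (∀ u ∈ I, ∀ v ∈ R, ¬ G.Adj u v) ∧
      ∃ M : J → I, Function.Injective M ∧ ∀ x : J, G.Adj (x : V) (M x : V) :=
  stmt16_general G A B hdisj hbip hcard
end

section
/- Let G be a graph, A ⊆ V(G) such that every component of G[A] has exactly l vertices and N(A) ⊆ B where B = V(G) \ A meets this. Form the bipartite 'component graph' G' with one side A' the components of G[A], other side B' = N(A), and an edge between a component C and vertex b iff b is adjacent to C in G. Then (I', J', R') is a VC crown decomposition of G' with I' ⊆ A', J' ⊆ B' if and only if the corresponding sets I* = ∪_{C∈I'} V(C), J* = J' form an ECOC crown decomposition (I*, J*, V(G) \ (I* ∪ J*)) of G. -/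
open SimpleGraph

variable {V : Type*}

/-!
Both crown conditions unfold to the same statement about `I'` and `J'` (`IsComponentCrown`).
The set `I* = ⋃_{C ∈ I'} V(C)` is a union of components of `G[A]`, so it is closed under
adjacency inside `A`: a walk of `G[A]` that starts in `I*` stays in `I*`. Hence the components
of `G[I*]` are exactly the components in `I'`, with the same vertex sets (so all of size `l`);
an edge leaving `I*` also leaves `A`, so it ends in `N(A)`; and a matching of `J*` into the
components of `G[I*]` is the same thing as a matching of `J'` into `I'`.
-/

theorem Function.exists_injective_iff_of_equiv {α β γ δ : Type*} (e₁ : α ≃ γ) (e₂ : β ≃ δ)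
    {P : α → β → Prop} {Q : γ → δ → Prop} (hPQ : ∀ a b, P a b ↔ Q (e₁ a) (e₂ b)) :
    (∃ f : α → β, Function.Injective f ∧ ∀ a, P a (f a)) ↔
      ∃ g : γ → δ, Function.Injective g ∧ ∀ c, Q c (g c) := by
  constructor
  · rintro ⟨f, hf, hP⟩
    refine ⟨e₂ ∘ f ∘ e₁.symm, e₂.injective.comp (hf.comp e₁.symm.injective), fun c => ?_⟩
    simpa using (hPQ _ _).1 (hP (e₁.symm c))
  · rintro ⟨g, hg, hQ⟩
    refine ⟨e₂.symm ∘ g ∘ e₁, e₂.symm.injective.comp (hg.comp e₁.injective), fun a => ?_⟩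
    simpa [hPQ] using hQ (e₁ a)

namespace SimpleGraph

section ClosedSubset

variable {G : SimpleGraph V} {X A : Set V}

theorem Reachable.exists_reachable_induce_of_closed
    (hX : ∀ u ∈ X, ∀ v ∈ A, G.Adj u v → v ∈ X) {a b : A}
    (hab : (G.induce A).Reachable a b) (ha : (a : V) ∈ X) :
    ∃ hb : (b : V) ∈ X, (G.induce X).Reachable ⟨a, ha⟩ ⟨b, hb⟩ := by
  obtain ⟨w⟩ := hab
  induction w with
  | nil => exact ⟨ha, .rfl⟩
  | @cons a c b hac _ ih =>
    have hc : (c : V) ∈ X := hX a ha c c.2 hac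
    obtain ⟨hb, hcb⟩ := ih hc
    exact ⟨hb, (show (G.induce X).Adj ⟨a, ha⟩ ⟨c, hc⟩ from hac).reachable.trans hcb⟩

theorem ConnectedComponent.map_induceHomOfLE_injective (hXA : X ⊆ A)
    (hX : ∀ u ∈ X, ∀ v ∈ A, G.Adj u v → v ∈ X) :
    Function.Injective (ConnectedComponent.map (G.induceHomOfLE hXA).toHom) := by
  intro c d hcd
  induction c using ConnectedComponent.ind with | _ u =>
  induction d using ConnectedComponent.ind with | _ v =>
  obtain ⟨_, huv⟩ := (ConnectedComponent.exact hcd).exists_reachable_induce_of_closed hX u.2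
  exact ConnectedComponent.sound huv

theorem ConnectedComponent.supp_map_induceHomOfLE (hXA : X ⊆ A)
    (hX : ∀ u ∈ X, ∀ v ∈ A, G.Adj u v → v ∈ X) (c : (G.induce X).ConnectedComponent) :
    (c.map (G.induceHomOfLE hXA).toHom).supp = (G.induceHomOfLE hXA) '' c.supp := by
  induction c using ConnectedComponent.ind with | _ u =>
  ext w
  constructor
  · intro hw
    obtain ⟨hwX, huw⟩ :=
      (ConnectedComponent.exact hw).symm.exists_reachable_induce_of_closed hX u.2
    exact ⟨⟨w, hwX⟩, (ConnectedComponent.sound huw).symm, rfl⟩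
  · rintro ⟨v, hv, rfl⟩
    exact congrArg (ConnectedComponent.map (G.induceHomOfLE hXA).toHom) hv

end ClosedSubset

section ComponentsUnion

def componentsUnion (G : SimpleGraph V) (A : Set V) (I' : Set (G.induce A).ConnectedComponent) :
    Set V :=
  {v | ∃ h : v ∈ A, (G.induce A).connectedComponentMk ⟨v, h⟩ ∈ I'}

variable {G : SimpleGraph V} {A : Set V} {I' : Set (G.induce A).ConnectedComponent}

theorem componentsUnion_subset : componentsUnion G A I' ⊆ A := fun _ hv => hv.1

theorem mem_componentsUnion_of_adj {u v : V} (hu : u ∈ componentsUnion G A I') (hv : v ∈ A)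
    (huv : G.Adj u v) : v ∈ componentsUnion G A I' := by
  obtain ⟨huA, huI⟩ := hu
  have hvu : (G.induce A).Adj ⟨v, hv⟩ ⟨u, huA⟩ := huv.symm
  exact ⟨hv, ConnectedComponent.sound hvu.reachable ▸ huI⟩

theorem mem_componentsUnion_of_mem_supp {c : (G.induce A).ConnectedComponent} (hc : c ∈ I')
    {u : A} (hu : u ∈ c.supp) : (u : V) ∈ componentsUnion G A I' :=
  ⟨u.2, (ConnectedComponent.mem_supp_iff c u).1 hu ▸ hc⟩

variable (G A I') in
noncomputable def componentsUnionEquiv :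
    (G.induce (componentsUnion G A I')).ConnectedComponent ≃ I' :=
  Equiv.ofBijective
    (fun d => ⟨d.map (G.induceHomOfLE componentsUnion_subset).toHom,
      d.ind fun u => u.2.2⟩)
    ⟨fun _ _ hde => ConnectedComponent.map_induceHomOfLE_injective componentsUnion_subset
      (fun _ hu _ => mem_componentsUnion_of_adj hu) (Subtype.ext_iff.1 hde),
    fun ⟨c, hc⟩ => by
      obtain ⟨u, rfl⟩ := c.exists_rep
      exact ⟨(G.induce _).connectedComponentMk ⟨u, u.2, hc⟩, rfl⟩⟩

theorem supp_componentsUnionEquiv (d : (G.induce (componentsUnion G A I')).ConnectedComponent) :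
    (componentsUnionEquiv G A I' d : (G.induce A).ConnectedComponent).supp =
      G.induceHomOfLE componentsUnion_subset '' d.supp :=
  ConnectedComponent.supp_map_induceHomOfLE componentsUnion_subset
    (fun _ hu _ => mem_componentsUnion_of_adj hu) d

theorem exists_adj_componentsUnionEquiv_iff
    (d : (G.induce (componentsUnion G A I')).ConnectedComponent) (x : V) :
    (∃ u ∈ (componentsUnionEquiv G A I' d : (G.induce A).ConnectedComponent).supp,
      G.Adj u x) ↔ ∃ u ∈ d.supp, G.Adj u x := by
  rw [supp_componentsUnionEquiv, Set.exists_mem_image]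
  rfl

theorem card_supp_componentsUnionEquiv
    (d : (G.induce (componentsUnion G A I')).ConnectedComponent) :
    Nat.card (componentsUnionEquiv G A I' d : (G.induce A).ConnectedComponent).supp =
      Nat.card d.supp := by
  rw [supp_componentsUnionEquiv]
  exact Nat.card_image_of_injective (G.induceHomOfLE _).injective _

end ComponentsUnion

section Crowns

variable {W : Type*} (H : SimpleGraph W) (G : SimpleGraph V) (A : Set V)

def IsVCCrown (I J : Set W) : Prop :=
  (∀ u ∈ I, ∀ v ∈ I, ¬ H.Adj u v) ∧
  (∀ u ∈ I, ∀ v, v ∉ I → v ∉ J → ¬ H.Adj u v) ∧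
  ∃ M : J → I, Function.Injective M ∧ ∀ x : J, H.Adj x.1 (M x).1

def IsComponentGraph (G' : SimpleGraph ((G.induce A).ConnectedComponent ⊕ (nbhd G A : Set V))) :
    Prop :=
  ∀ a b, G'.Adj a b ↔
    ((∃ c u bb, a = Sum.inl c ∧ b = Sum.inr bb ∧ u ∈ c.supp ∧ G.Adj (u : V) (bb : V)) ∨
     (∃ c u bb, b = Sum.inl c ∧ a = Sum.inr bb ∧ u ∈ c.supp ∧ G.Adj (u : V) (bb : V)))

def IsComponentCrown (I' : Set (G.induce A).ConnectedComponent) (J' : Set (nbhd G A : Set V)) :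
    Prop :=
  (∀ c ∈ I', ∀ u ∈ c.supp, ∀ b : (nbhd G A : Set V), G.Adj u b → b ∈ J') ∧
  ∃ M : J' → I', Function.Injective M ∧
    ∀ j, ∃ u ∈ (M j : (G.induce A).ConnectedComponent).supp, G.Adj u j

variable {G A} {G' : SimpleGraph ((G.induce A).ConnectedComponent ⊕ (nbhd G A : Set V))}

namespace IsComponentGraph

theorem not_adj_inl_inl (hG' : IsComponentGraph G A G') {c c' : (G.induce A).ConnectedComponent} :
    ¬ G'.Adj (.inl c) (.inl c') := by
  simp [hG' _ _]

theorem adj_inl_inr_iff (hG' : IsComponentGraph G A G') {c : (G.induce A).ConnectedComponent}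
    {b : (nbhd G A : Set V)} : G'.Adj (.inl c) (.inr b) ↔ ∃ u ∈ c.supp, G.Adj u b := by
  simp [hG' _ _]

theorem adj_inr_inl_iff (hG' : IsComponentGraph G A G') {c : (G.induce A).ConnectedComponent}
    {b : (nbhd G A : Set V)} : G'.Adj (.inr b) (.inl c) ↔ ∃ u ∈ c.supp, G.Adj u b :=
  G'.adj_comm _ _ |>.trans hG'.adj_inl_inr_iff

theorem isVCCrown_iff (hG' : IsComponentGraph G A G') (I' : Set (G.induce A).ConnectedComponent)
    (J' : Set (nbhd G A : Set V)) :
    IsVCCrown G' (Sum.inl '' I') (Sum.inr '' J') ↔ IsComponentCrown G A I' J' := by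
  have hindep : ∀ u ∈ Sum.inl '' I', ∀ v ∈ Sum.inl '' I', ¬ G'.Adj u v := by
    rintro _ ⟨c, -, rfl⟩ _ ⟨c', -, rfl⟩
    exact hG'.not_adj_inl_inl
  have hclosed : (∀ u ∈ Sum.inl '' I', ∀ v, v ∉ Sum.inl '' I' → v ∉ Sum.inr '' J' → ¬ G'.Adj u v) ↔
      ∀ c ∈ I', ∀ u ∈ c.supp, ∀ b : (nbhd G A : Set V), G.Adj u b → b ∈ J' := by
    constructor
    · intro h c hc u hu b hub
      by_contra hb
      exact h _ ⟨c, hc, rfl⟩ (.inr b) (by simp) (by simpa using hb)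
        (hG'.adj_inl_inr_iff.2 ⟨u, hu, hub⟩)
    · rintro h _ ⟨c, hc, rfl⟩ (c' | b) - hbJ hadj
      · exact hG'.not_adj_inl_inl hadj
      · obtain ⟨u, hu, hub⟩ := hG'.adj_inl_inr_iff.1 hadj
        exact hbJ ⟨b, h c hc u hu b hub, rfl⟩
  have hmatch := Function.exists_injective_iff_of_equiv
    (Equiv.Set.image _ J' Sum.inr_injective) (Equiv.Set.image _ I' Sum.inl_injective)
    (P := fun j c => ∃ u ∈ (c : (G.induce A).ConnectedComponent).supp, G.Adj u j)
    (Q := fun x y => G'.Adj x.1 y.1) fun _ _ => hG'.adj_inr_inl_iff.symm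
  rw [IsVCCrown, IsComponentCrown, hclosed, hmatch]
  exact and_iff_right hindep

end IsComponentGraph

theorem isECOCCrown_componentsUnion_iff {l : ℕ} (hsz : AllCompsSize G A l)
    (I' : Set (G.induce A).ConnectedComponent) (J' : Set (nbhd G A : Set V)) :
    IsECOCCrown G l (componentsUnion G A I') (Subtype.val '' J')
      (componentsUnion G A I' ∪ Subtype.val '' J')ᶜ ↔ IsComponentCrown G A I' J' := by
  have hIJ : Disjoint (componentsUnion G A I') (Subtype.val '' J') :=
    Set.disjoint_left.2 fun _ hv ⟨j, _, hj⟩ => j.2.1 (hj ▸ hv.1)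
  have hsize : AllCompsSize G (componentsUnion G A I') l := fun d =>
    (card_supp_componentsUnionEquiv d).symm.trans (hsz _)
  have hclosed : (∀ u ∈ componentsUnion G A I', ∀ v ∈ (componentsUnion G A I' ∪ Subtype.val '' J')ᶜ,
      ¬ G.Adj u v) ↔ ∀ c ∈ I', ∀ u ∈ c.supp, ∀ b : (nbhd G A : Set V), G.Adj u b → b ∈ J' := by
    constructor
    · intro h c hc u hu b hub
      by_contra hb
      refine h u (mem_componentsUnion_of_mem_supp hc hu) b ?_ hub
      rintro (hbI | ⟨j, hj, hjb⟩)
      · exact b.2.1 hbI.1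
      · exact hb (Subtype.ext hjb ▸ hj)
    · rintro h u ⟨huA, huI⟩ v hv huv
      have hvA : v ∉ A := fun hvA => hv (.inl (mem_componentsUnion_of_adj ⟨huA, huI⟩ hvA huv))
      exact hv (.inr ⟨⟨v, hvA, u, huA, huv⟩, h _ huI ⟨u, huA⟩ rfl _ huv, rfl⟩)
  have hmatch := Function.exists_injective_iff_of_equiv
    (Equiv.Set.image _ J' Subtype.val_injective) (componentsUnionEquiv G A I').symm
    (P := fun j c => ∃ u ∈ (c : (G.induce A).ConnectedComponent).supp, G.Adj u j)
    (Q := fun x d => ∃ u ∈ d.supp, G.Adj u x) fun j c => by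
      simpa using exists_adj_componentsUnionEquiv_iff ((componentsUnionEquiv G A I').symm c) j
  rw [IsECOCCrown, IsComponentCrown, hclosed, hmatch]
  exact ⟨fun ⟨_, _, _, _, _, h⟩ => h, fun h => ⟨Set.union_compl_self _, hIJ,
    disjoint_compl_right.mono_left Set.subset_union_left,
    disjoint_compl_right.mono_left Set.subset_union_right, hsize, h⟩⟩

end Crowns

end SimpleGraph

theorem stmt17_general (G : SimpleGraph V) (l : ℕ)
    (A : Set V) (hsz : AllCompsSize G A l)
    (G' : SimpleGraph ((G.induce A).ConnectedComponent ⊕ (nbhd G A : Set V)))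
    (hG' : ∀ a b, G'.Adj a b ↔
      ((∃ c u bb, a = Sum.inl c ∧ b = Sum.inr bb ∧ u ∈ c.supp ∧ G.Adj (u : V) (bb : V)) ∨
       (∃ c u bb, b = Sum.inl c ∧ a = Sum.inr bb ∧ u ∈ c.supp ∧ G.Adj (u : V) (bb : V))))
    (I' : Set ((G.induce A).ConnectedComponent))
    (J' : Set ((nbhd G A : Set V))) :
    -- (Sum.inl '' I', Sum.inr '' J', rest) is a VC crown decomposition of G'
    ((∀ u ∈ Sum.inl '' I', ∀ v ∈ Sum.inl '' I', ¬ G'.Adj u v) ∧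
     (∀ u ∈ Sum.inl '' I', ∀ v, v ∉ Sum.inl '' I' → v ∉ Sum.inr '' J' → ¬ G'.Adj u v) ∧
     (∃ M : (Sum.inr '' J' : Set _) → (Sum.inl '' I' : Set _),
        Function.Injective M ∧ ∀ x : (Sum.inr '' J' : Set _), G'.Adj x.1 (M x).1))
    ↔
    -- the corresponding sets form an ECOC crown decomposition of G
    (IsECOCCrown G l
      {v : V | ∃ h : v ∈ A, (G.induce A).connectedComponentMk ⟨v, h⟩ ∈ I'}
      (Subtype.val '' J')
      ({v : V | ∃ h : v ∈ A, (G.induce A).connectedComponentMk ⟨v, h⟩ ∈ I'} ∪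
        Subtype.val '' J')ᶜ) :=
  (IsComponentGraph.isVCCrown_iff hG' I' J').trans
    (isECOCCrown_componentsUnion_iff hsz I' J').symm

theorem stmt17 [Fintype V] [DecidableEq V] (G : SimpleGraph V) (l : ℕ) (hl : 1 ≤ l)
    (A : Set V) (hsz : AllCompsSize G A l)
    (G' : SimpleGraph ((G.induce A).ConnectedComponent ⊕ (nbhd G A : Set V)))
    (hG' : ∀ a b, G'.Adj a b ↔
      ((∃ c u bb, a = Sum.inl c ∧ b = Sum.inr bb ∧ u ∈ c.supp ∧ G.Adj (u : V) (bb : V)) ∨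
       (∃ c u bb, b = Sum.inl c ∧ a = Sum.inr bb ∧ u ∈ c.supp ∧ G.Adj (u : V) (bb : V))))
    (I' : Set ((G.induce A).ConnectedComponent))
    (J' : Set ((nbhd G A : Set V))) :
    -- (Sum.inl '' I', Sum.inr '' J', rest) is a VC crown decomposition of G'
    ((∀ u ∈ Sum.inl '' I', ∀ v ∈ Sum.inl '' I', ¬ G'.Adj u v) ∧
     (∀ u ∈ Sum.inl '' I', ∀ v, v ∉ Sum.inl '' I' → v ∉ Sum.inr '' J' → ¬ G'.Adj u v) ∧
     (∃ M : (Sum.inr '' J' : Set _) → (Sum.inl '' I' : Set _),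
        Function.Injective M ∧ ∀ x : (Sum.inr '' J' : Set _), G'.Adj x.1 (M x).1))
    ↔
    -- the corresponding sets form an ECOC crown decomposition of G
    (IsECOCCrown G l
      {v : V | ∃ h : v ∈ A, (G.induce A).connectedComponentMk ⟨v, h⟩ ∈ I'}
      (Subtype.val '' J')
      ({v : V | ∃ h : v ∈ A, (G.induce A).connectedComponentMk ⟨v, h⟩ ∈ I'} ∪
        Subtype.val '' J')ᶜ) :=
  stmt17_general G l A hsz G' hG' I' J'
end
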